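/- The function f(ζ) = ρ(ζ) defined for ζ ∈ [0,1] by ρ(ζ) = τ p_t p_d · r^H Γ(ζ)^{-1} r, where Γ(ζ) = (ζ(1−ζ) c_1) Γ_w + (ζ c_2) Λ_w + ((1−ζ) c_3) Ψ + Γ_0 with Γ_w, Λ_w, Ψ positive semidefinite Hermitian, Γ_0 positive definite Hermitian, and c_1, c_2, c_3 > 0, satisfies f''(ζ) = τ p_t p_d · r^H Γ^{-1}(2 Γ' Γ^{-1} Γ' − Γ'') Γ^{-1} r where Γ'' = −2c_1 Γ_w; consequently, if Γ_w is positive definite then f''(ζ) > 0 for all ζ ∈ [0,1] and all r ≠ 0, so f is strictly convex. -/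

import Mathlib

/-!
`Γ` is quadratic in `ζ` with `Γ'' = −2c₁Γ_w`, so differentiating `Γ⁻¹` twice gives
`(Γ⁻¹)'' = Γ⁻¹ (2 Γ' Γ⁻¹ Γ' − Γ'') Γ⁻¹`. On `[0,1]` every coefficient of `Γ` is nonnegative,
so `Γ ≻ 0`. Since `Γ'` is Hermitian, `Γ' Γ⁻¹ Γ' ⪰ 0`, hence for `Γ_w ≻ 0` the middle factor
is positive definite, and so is its congruence by `Γ⁻¹`: the quadratic form `rᴴ (Γ⁻¹)'' r`
is positive for `r ≠ 0`.
-/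

open Matrix
open scoped ComplexOrder Topology

-- Any matrix norm would do: it induces the product topology, which is all the statement sees.
attribute [local instance] Matrix.linftyOpNormedRing Matrix.linftyOpNormedAlgebra

namespace Matrix

section QuadForm

variable {n : Type*} [Fintype n] {𝕜 : Type*} [RCLike 𝕜]

noncomputable def reQuadFormCLM (r : n → 𝕜) : Matrix n n 𝕜 →L[ℝ] ℝ :=
  LinearMap.toContinuousLinearMap
    { toFun := fun M => RCLike.re (star r ⬝ᵥ (M *ᵥ r))
      map_add' := fun M N => by rw [add_mulVec, dotProduct_add, map_add]
      map_smul' := fun c M => by rw [smul_mulVec, dotProduct_smul, RCLike.smul_re]; rfl }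

end QuadForm

variable {n : Type*} [Fintype n] [DecidableEq n] {𝕜 : Type*} [RCLike 𝕜]

theorem PosDef.inv_mul_mul_inv {G M : Matrix n n 𝕜} (hG : G.PosDef) (hM : M.PosDef) :
    (G⁻¹ * M * G⁻¹).PosDef := by
  simpa only [hG.inv.isHermitian.eq] using
    hM.conjTranspose_mul_mul_same (mulVec_injective_of_isUnit hG.inv.isUnit)

theorem PosDef.two_nsmul_mul_inv_mul_sub {G A B : Matrix n n 𝕜} (hG : G.PosDef)
    (hA : A.IsHermitian) (hB : (-B).PosDef) : (2 • (A * G⁻¹ * A) - B).PosDef := by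
  have hAGA : (A * G⁻¹ * A).PosSemidef := by
    simpa only [hA.eq] using hG.inv.posSemidef.conjTranspose_mul_mul_same A
  rw [sub_eq_add_neg, two_smul]
  exact PosDef.posSemidef_add (hAGA.add hAGA) hB

section Derivatives

variable {F : Type*} [NormedAddCommGroup F] [NormedSpace ℝ F]

theorem _root_.HasDerivAt.matrix_inv {G : ℝ → Matrix n n 𝕜} {G' : Matrix n n 𝕜} {x : ℝ}
    (hG : HasDerivAt G G' x) (hx : IsUnit (G x)) :
    HasDerivAt (fun t => (G t)⁻¹) (-((G x)⁻¹ * G' * (G x)⁻¹)) x := by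
  obtain ⟨u, hu⟩ := hx
  have h := (hu ▸ hasFDerivAt_ringInverse (𝕜 := ℝ) u).comp_hasDerivAt x hG
  simp only [nonsing_inv_eq_ringInverse]
  refine h.congr_deriv ?_
  simp [← hu]

theorem _root_.HasDerivAt.neg_matrix_inv_mul_mul_inv {G G' : ℝ → Matrix n n 𝕜}
    {G'' : Matrix n n 𝕜} {x : ℝ} (hG : HasDerivAt G (G' x) x) (hG' : HasDerivAt G' G'' x)
    (hx : IsUnit (G x)) :
    HasDerivAt (fun t => -((G t)⁻¹ * G' t * (G t)⁻¹))
      ((G x)⁻¹ * (2 • (G' x * (G x)⁻¹ * G' x) - G'') * (G x)⁻¹) x := by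
  have hinv := hG.matrix_inv hx
  refine ((hinv.mul hG').mul hinv).neg.congr_deriv ?_
  simp only [Pi.mul_apply, two_smul]
  noncomm_ring

variable {G G' : ℝ → Matrix n n 𝕜} {G'' : Matrix n n 𝕜} (L : Matrix n n 𝕜 →L[ℝ] F)

theorem hasDerivAt_clm_comp_matrix_inv {x : ℝ} (hG : HasDerivAt G (G' x) x)
    (hx : IsUnit (G x)) :
    HasDerivAt (fun t => L (G t)⁻¹) (L (-((G x)⁻¹ * G' x * (G x)⁻¹))) x :=
  L.hasFDerivAt.comp_hasDerivAt x (hG.matrix_inv hx)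

theorem deriv_deriv_clm_comp_matrix_inv (hG : ∀ t, HasDerivAt G (G' t) t)
    (hG' : ∀ t, HasDerivAt G' G'' t) {x : ℝ} (hx : IsUnit (G x)) :
    deriv (deriv fun t => L (G t)⁻¹) x =
      L ((G x)⁻¹ * (2 • (G' x * (G x)⁻¹ * G' x) - G'') * (G x)⁻¹) := by
  have hunits : ∀ᶠ t in 𝓝 x, IsUnit (G t) :=
    (hG x).continuousAt.eventually_mem (Units.isOpen.mem_nhds hx)
  have hderiv :
      deriv (fun t => L (G t)⁻¹) =ᶠ[𝓝 x] fun t => L (-((G t)⁻¹ * G' t * (G t)⁻¹)) :=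
    hunits.mono fun t ht => (hasDerivAt_clm_comp_matrix_inv L (hG t) ht).deriv
  rw [hderiv.deriv_eq]
  exact (L.hasFDerivAt.comp_hasDerivAt x ((hG x).neg_matrix_inv_mul_mul_inv (hG' x) hx)).deriv

end Derivatives

end Matrix

section JammerCovariance

variable {n : Type*} (Γw Λw Ψ Γ0 : Matrix n n ℂ) (c1 c2 c3 : ℝ)

def jammerCovariance (ζ : ℝ) : Matrix n n ℂ :=
  ((ζ * (1 - ζ) * c1 : ℝ) : ℂ) • Γw + ((ζ * c2 : ℝ) : ℂ) • Λw + (((1 - ζ) * c3 : ℝ) : ℂ) • Ψ + Γ0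

def jammerCovarianceDeriv (ζ : ℝ) : Matrix n n ℂ :=
  (((1 - 2 * ζ) * c1 : ℝ) : ℂ) • Γw + ((c2 : ℝ) : ℂ) • Λw - ((c3 : ℝ) : ℂ) • Ψ

theorem hasDerivAt_jammerCovariance [Fintype n] [DecidableEq n] (ζ : ℝ) :
    HasDerivAt (jammerCovariance Γw Λw Ψ Γ0 c1 c2 c3)
      (jammerCovarianceDeriv Γw Λw Ψ c1 c2 c3 ζ) ζ := by
  have h1 : HasDerivAt (fun ζ : ℝ => ζ * (1 - ζ) * c1) ((1 - 2 * ζ) * c1) ζ :=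
    (((hasDerivAt_id ζ).mul ((hasDerivAt_id ζ).const_sub 1)).mul_const c1).congr_deriv
      (by simp only [id_eq]; ring)
  have h2 : HasDerivAt (fun ζ : ℝ => ζ * c2) c2 ζ := by
    simpa using (hasDerivAt_id ζ).mul_const c2
  have h3 : HasDerivAt (fun ζ : ℝ => (1 - ζ) * c3) (-c3) ζ := by
    simpa using ((hasDerivAt_id ζ).const_sub 1).mul_const c3
  refine ((((h1.ofReal_comp.smul_const Γw).add (h2.ofReal_comp.smul_const Λw)).add
    (h3.ofReal_comp.smul_const Ψ)).add_const Γ0).congr_deriv ?_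
  simp [jammerCovarianceDeriv, sub_eq_add_neg]

theorem hasDerivAt_jammerCovarianceDeriv [Fintype n] [DecidableEq n] (ζ : ℝ) :
    HasDerivAt (jammerCovarianceDeriv Γw Λw Ψ c1 c2 c3) (((-2 * c1 : ℝ) : ℂ) • Γw) ζ := by
  have h : HasDerivAt (fun ζ : ℝ => (1 - 2 * ζ) * c1) (-2 * c1) ζ := by
    simpa using (((hasDerivAt_id ζ).const_mul 2).const_sub 1).mul_const c1
  exact ((h.ofReal_comp.smul_const Γw).add_const _).sub_const _

theorem isHermitian_jammerCovarianceDeriv (hΓw : Γw.IsHermitian) (hΛw : Λw.IsHermitian)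
    (hΨ : Ψ.IsHermitian) (ζ : ℝ) : (jammerCovarianceDeriv Γw Λw Ψ c1 c2 c3 ζ).IsHermitian :=
  ((hΓw.smul (Complex.conj_ofReal _)).add (hΛw.smul (Complex.conj_ofReal _))).sub
    (hΨ.smul (Complex.conj_ofReal _))

theorem posDef_jammerCovariance [Fintype n] (hΓw : Γw.PosSemidef) (hΛw : Λw.PosSemidef)
    (hΨ : Ψ.PosSemidef) (hΓ0 : Γ0.PosDef) (hc1 : 0 ≤ c1) (hc2 : 0 ≤ c2) (hc3 : 0 ≤ c3)
    {ζ : ℝ} (hζ : ζ ∈ Set.Icc (0 : ℝ) 1) : (jammerCovariance Γw Λw Ψ Γ0 c1 c2 c3 ζ).PosDef := by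
  obtain ⟨hζ0, hζ1⟩ := hζ
  have h1ζ : 0 ≤ 1 - ζ := sub_nonneg.mpr hζ1
  refine Matrix.PosDef.posSemidef_add (((hΓw.smul ?_).add (hΛw.smul ?_)).add (hΨ.smul ?_)) hΓ0
    <;> rw [Complex.zero_le_real] <;> positivity

end JammerCovariance

/-- Theorem 3 (convexity of the jammer's power allocation problem): for
`Γ(ζ) = ζ(1−ζ)c₁ Γ_w + ζc₂ Λ_w + (1−ζ)c₃ Ψ + Γ₀` with `Γ_w, Λ_w, Ψ` positive
semidefinite Hermitian, `Γ₀` positive definite Hermitian and `c₁, c₂, c₃ > 0`, the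
function `f(ζ) = τ p_t p_d · rᴴ Γ(ζ)⁻¹ r` satisfies
`f''(ζ) = τ p_t p_d · rᴴ Γ⁻¹ (2 Γ' Γ⁻¹ Γ' − Γ'') Γ⁻¹ r` with `Γ'' = −2c₁ Γ_w`;
consequently, if `Γ_w` is positive definite then `f''(ζ) > 0` on `[0,1]` for all
`r ≠ 0`, so `f` is strictly convex. -/
theorem jammer_objective_second_derivative_and_convexity
    {n : Type*} [Fintype n] [DecidableEq n]
    (Γw Λw Ψ Γ0 : Matrix n n ℂ)
    (hΓw : Γw.PosSemidef) (hΛw : Λw.PosSemidef) (hΨ : Ψ.PosSemidef) (hΓ0 : Γ0.PosDef)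
    (c1 c2 c3 : ℝ) (hc1 : 0 < c1) (hc2 : 0 < c2) (hc3 : 0 < c3)
    (τ pt pd : ℝ) (hτ : 0 < τ) (hpt : 0 < pt) (hpd : 0 < pd)
    (r : n → ℂ)
    (G G' : ℝ → Matrix n n ℂ) (G'' : Matrix n n ℂ)
    (hG : G = fun ζ => ((ζ * (1 - ζ) * c1 : ℝ) : ℂ) • Γw + ((ζ * c2 : ℝ) : ℂ) • Λw
        + (((1 - ζ) * c3 : ℝ) : ℂ) • Ψ + Γ0)
    (hG' : G' = fun ζ => (((1 - 2 * ζ) * c1 : ℝ) : ℂ) • Γw + ((c2 : ℝ) : ℂ) • Λw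
        - ((c3 : ℝ) : ℂ) • Ψ)
    (hG'' : G'' = ((-2 * c1 : ℝ) : ℂ) • Γw)
    (f : ℝ → ℝ)
    (hf : f = fun ζ => τ * pt * pd * (star r ⬝ᵥ ((G ζ)⁻¹.mulVec r)).re) :
    (∀ ζ ∈ Set.Icc (0 : ℝ) 1,
      deriv (deriv f) ζ = τ * pt * pd *
        (star r ⬝ᵥ (((G ζ)⁻¹ * (2 • (G' ζ * (G ζ)⁻¹ * G' ζ) - G'') * (G ζ)⁻¹).mulVec r)).re ∧
      (Γw.PosDef → r ≠ 0 → 0 < deriv (deriv f) ζ)) ∧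
    (Γw.PosDef → r ≠ 0 → StrictConvexOn ℝ (Set.Icc (0 : ℝ) 1) f) := by
  set L : Matrix n n ℂ →L[ℝ] ℝ := (τ * pt * pd) • reQuadFormCLM r
  have hfL : f = fun ζ => L (G ζ)⁻¹ := hf
  have hGd : ∀ ζ, HasDerivAt G (G' ζ) ζ :=
    hG ▸ hG' ▸ hasDerivAt_jammerCovariance Γw Λw Ψ Γ0 c1 c2 c3
  have hG'd : ∀ ζ, HasDerivAt G' G'' ζ :=
    hG' ▸ hG'' ▸ hasDerivAt_jammerCovarianceDeriv Γw Λw Ψ c1 c2 c3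
  have hGpd : ∀ ζ ∈ Set.Icc (0 : ℝ) 1, (G ζ).PosDef := fun ζ hζ =>
    hG ▸ posDef_jammerCovariance Γw Λw Ψ Γ0 c1 c2 c3 hΓw hΛw hΨ hΓ0 hc1.le hc2.le hc3.le hζ
  have hf'' : ∀ ζ ∈ Set.Icc (0 : ℝ) 1, deriv (deriv f) ζ =
      L ((G ζ)⁻¹ * (2 • (G' ζ * (G ζ)⁻¹ * G' ζ) - G'') * (G ζ)⁻¹) := fun ζ hζ =>
    hfL ▸ deriv_deriv_clm_comp_matrix_inv L hGd hG'd (hGpd ζ hζ).isUnit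
  have hpos : ∀ ζ ∈ Set.Icc (0 : ℝ) 1, Γw.PosDef → r ≠ 0 → 0 < deriv (deriv f) ζ := by
    intro ζ hζ hΓw' hr
    have hnegG'' : (-G'').PosDef := by
      rw [hG'', ← neg_smul, ← Complex.ofReal_neg]
      exact hΓw'.smul (Complex.zero_lt_real.mpr (by linarith))
    have hG'herm : (G' ζ).IsHermitian :=
      hG' ▸ isHermitian_jammerCovarianceDeriv Γw Λw Ψ c1 c2 c3 hΓw.1 hΛw.1 hΨ.1 ζ
    have hform := ((hGpd ζ hζ).inv_mul_mul_inv
      ((hGpd ζ hζ).two_nsmul_mul_inv_mul_sub hG'herm hnegG'')).re_dotProduct_pos hr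
    rw [hf'' ζ hζ]
    exact mul_pos (by positivity) hform
  refine ⟨fun ζ hζ => ⟨hf'' ζ hζ, hpos ζ hζ⟩, fun hΓw' hr => ?_⟩
  refine strictConvexOn_of_deriv2_pos (convex_Icc 0 1) (fun ζ hζ => ?_) (fun ζ hζ => ?_)
  · exact hfL ▸ (hasDerivAt_clm_comp_matrix_inv L (hGd ζ) (hGpd ζ hζ).isUnit).continuousAt
      |>.continuousWithinAt
  · rw [interior_Icc] at hζ
    exact hpos ζ (Set.Ioo_subset_Icc_self hζ) hΓw' hr
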